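/- Let (X, Y₁, Y₂, Z, p_{Y₁,Y₂,Z|X}) be a discrete memoryless WTBC and let (R₁,R₂) be an achievable rate pair with corresponding codes {c_n = (f_n, φ₁^{(n)}, φ₂^{(n)})}, γ > 0 and PMF q_Z on Z satisfying ‖P^{(c_n)}_{M₁,M₂,M̂₁,M̂₂,Z^n} − p^U_{M₁×M₂} 1{(M̂₁,M̂₂)=(M₁,M₂)} q_Z^n‖_TV ≤ e^{−nγ} for all large n. Define g_n = P^{(c_n)}_{X^n|Z^n,M₁,M₂} and ψ_j^{(n)} = φ_j^{(n)} (j=1,2). Then: (1) b_n = (g_n, ψ₁^{(n)}, ψ₂^{(n)}) is an (n,R₁,R₂)-code for the GPBC (Z, X, Y₁, Y₂, q_Z, p_{Y₁,Y₂|X,Z}); (2) the induced joint PMF Q^{(b_n)} satisfies ‖P^{(c_n)} − Q^{(b_n)}‖_TV ≤ e^{−nγ} for all sufficiently large n; and (3) P_e(b_n) = ℙ_{Q^{(b_n)}}((M̂₁,M̂₂) ≠ (M₁,M₂)) → 0, so (R₁,R₂) is achievable for that GPBC. -/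

import Mathlib

open scoped BigOperators Classical

noncomputable section

/-- Total variation distance between two PMFs on a finite set. -/
def tvDist {Ω : Type*} [Fintype Ω] (p q : Ω → ℝ) : ℝ :=
  (1 / 2) * ∑ x, |p x - q x|

/-- `p` is a probability mass function on the finite set `Ω`. -/
def IsPMF {Ω : Type*} [Fintype Ω] (p : Ω → ℝ) : Prop := (∀ x, 0 ≤ p x) ∧ ∑ x, p x = 1

/-- The message set `[1 : 2^{nR}]`, modelled as `Fin ⌈2^{nR}⌉`. -/
abbrev Msg (n : ℕ) (R : ℝ) : Type := Fin ⌈(2 : ℝ) ^ ((n : ℝ) * R)⌉₊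

/-- An `(n,R₁,R₂)`-code for a WTBC: a stochastic encoder `f_n : M₁ × M₂ → P(Xⁿ)` (data
`enc`, kernel property via `WTBCCode.valid`) and decoders `φⱼ : Yⱼⁿ → Mⱼ`. -/
structure WTBCCode (X Y1 Y2 Z : Type) [Fintype X] [Fintype Y1] [Fintype Y2] [Fintype Z]
    (n : ℕ) (R₁ R₂ : ℝ) where
  enc : Msg n R₁ × Msg n R₂ → (Fin n → X) → ℝ
  dec1 : (Fin n → Y1) → Msg n R₁
  dec2 : (Fin n → Y2) → Msg n R₂

/-- An `(n,R₁,R₂)`-code for a GPBC: a stochastic encoder `g_n : Zⁿ × M₁ × M₂ → P(Xⁿ)`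
(data `enc`, kernel property via `GPBCCode.valid`) and decoders `ψⱼ : Yⱼⁿ → Mⱼ`. -/
structure GPBCCode (Z X Y1 Y2 : Type) [Fintype Z] [Fintype X] [Fintype Y1] [Fintype Y2]
    (n : ℕ) (R₁ R₂ : ℝ) where
  enc : (Fin n → Z) → Msg n R₁ × Msg n R₂ → (Fin n → X) → ℝ
  dec1 : (Fin n → Y1) → Msg n R₁
  dec2 : (Fin n → Y2) → Msg n R₂

variable {X Y1 Y2 Z : Type} [Fintype X] [Fintype Y1] [Fintype Y2] [Fintype Z]
  {n : ℕ} {R₁ R₂ : ℝ}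

/-- The encoder of a WTBC code is an honest stochastic map. -/
def WTBCCode.valid (c : WTBCCode X Y1 Y2 Z n R₁ R₂) : Prop := ∀ m, IsPMF (c.enc m)

/-- The encoder of a GPBC code is an honest stochastic map. -/
def GPBCCode.valid (b : GPBCCode Z X Y1 Y2 n R₁ R₂) : Prop := ∀ z m, IsPMF (b.enc z m)

/-- The joint PMF `P^{(c_n)}` on `(M₁×M₂) × Xⁿ × Y₁ⁿ × Y₂ⁿ × Zⁿ × (M̂₁×M̂₂)` induced by an
`(n,R₁,R₂)`-code `c` over the memoryless WTBC with transition kernel `W = p_{Y₁,Y₂,Z|X}`. -/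
def WTBCCode.joint (W : X → Y1 × Y2 × Z → ℝ) (c : WTBCCode X Y1 Y2 Z n R₁ R₂) :
    (Msg n R₁ × Msg n R₂) × (Fin n → X) × (Fin n → Y1) × (Fin n → Y2) × (Fin n → Z) ×
      (Msg n R₁ × Msg n R₂) → ℝ := fun ω =>
  (((Fintype.card (Msg n R₁) : ℝ) * (Fintype.card (Msg n R₂) : ℝ))⁻¹)
    * c.enc ω.1 ω.2.1
    * (∏ i, W (ω.2.1 i) (ω.2.2.1 i, ω.2.2.2.1 i, ω.2.2.2.2.1 i))
    * (if c.dec1 ω.2.2.1 = ω.2.2.2.2.2.1 ∧ c.dec2 ω.2.2.2.1 = ω.2.2.2.2.2.2 then 1 else 0)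

/-- The marginal `P^{(c_n)}_{M₁,M₂,Zⁿ,M̂₁,M̂₂}` of the induced joint PMF. -/
def WTBCCode.margMZM (W : X → Y1 × Y2 × Z → ℝ) (c : WTBCCode X Y1 Y2 Z n R₁ R₂) :
    (Msg n R₁ × Msg n R₂) × (Fin n → Z) × (Msg n R₁ × Msg n R₂) → ℝ := fun ω =>
  ∑ x, ∑ y1, ∑ y2, c.joint W (ω.1, x, y1, y2, ω.2.1, ω.2.2)

/-- The marginal `P^{(c_n)}_{M₁,M₂,Xⁿ,Zⁿ}` of the induced joint PMF. -/
def WTBCCode.margMXZ (W : X → Y1 × Y2 × Z → ℝ) (c : WTBCCode X Y1 Y2 Z n R₁ R₂) :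
    (Msg n R₁ × Msg n R₂) × (Fin n → X) × (Fin n → Z) → ℝ := fun ω =>
  ∑ y1, ∑ y2, ∑ mh, c.joint W (ω.1, ω.2.1, y1, y2, ω.2.2, mh)

/-- The target measure `p^U_{M₁×M₂} · 1{(M̂₁,M̂₂)=(M₁,M₂)} · q_Z^n`. -/
def targetMZM (qZ : Z → ℝ) (n : ℕ) (R₁ R₂ : ℝ) :
    (Msg n R₁ × Msg n R₂) × (Fin n → Z) × (Msg n R₁ × Msg n R₂) → ℝ := fun ω =>
  (((Fintype.card (Msg n R₁) : ℝ) * (Fintype.card (Msg n R₂) : ℝ))⁻¹)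
    * (if ω.2.2 = ω.1 then 1 else 0) * ∏ i, qZ (ω.2.1 i)

/-- The conditional marginal `p_{Y₁,Y₂|X,Z}` of the WTBC transition kernel `p_{Y₁,Y₂,Z|X}`
(defined arbitrarily — uniform — where `p_{Z|X}(z|x) = 0`). -/
def condY12givenXZ (W : X → Y1 × Y2 × Z → ℝ) : X → Z → Y1 × Y2 → ℝ := fun x z y =>
  if 0 < ∑ y' : Y1 × Y2, W x (y'.1, y'.2, z)
  then W x (y.1, y.2, z) / ∑ y' : Y1 × Y2, W x (y'.1, y'.2, z)
  else ((Fintype.card Y1 : ℝ) * (Fintype.card Y2 : ℝ))⁻¹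

/-- The stochastic GPBC encoder `g_n = P^{(c_n)}_{Xⁿ|Zⁿ,M₁,M₂}` obtained from a WTBC code
`c` by conditioning its induced joint PMF on `(Zⁿ, M₁, M₂)` (defined arbitrarily — uniform
— where `P^{(c_n)}_{M₁,M₂,Zⁿ} = 0`). -/
def inducedGPBCEnc (W : X → Y1 × Y2 × Z → ℝ) (c : WTBCCode X Y1 Y2 Z n R₁ R₂) :
    (Fin n → Z) → Msg n R₁ × Msg n R₂ → (Fin n → X) → ℝ := fun z m x =>
  if 0 < ∑ x', c.margMXZ W (m, x', z)
  then c.margMXZ W (m, x, z) / ∑ x', c.margMXZ W (m, x', z)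
  else (Fintype.card (Fin n → X) : ℝ)⁻¹

/-- The GPBC code `b_n = (g_n, ψ₁, ψ₂)` induced by a WTBC code `c_n = (f_n, φ₁, φ₂)`:
`g_n = P^{(c_n)}_{Xⁿ|Zⁿ,M₁,M₂}` and `ψⱼ = φⱼ`. -/
def WTBCCode.toGPBC (W : X → Y1 × Y2 × Z → ℝ) (c : WTBCCode X Y1 Y2 Z n R₁ R₂) :
    GPBCCode Z X Y1 Y2 n R₁ R₂ where
  enc := inducedGPBCEnc W c
  dec1 := c.dec1
  dec2 := c.dec2

/-- The joint PMF `Q^{(b_n)}` induced by an `(n,R₁,R₂)`-GPBC code `b` over the GPBC with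
state PMF `q_Z` and transition kernel `Wg = q_{Y₁,Y₂|X,Z}`, recorded on the sample space
`(M₁×M₂) × Xⁿ × Y₁ⁿ × Y₂ⁿ × Zⁿ × (M̂₁×M̂₂)` (same ordering as `WTBCCode.joint`, so that
the two induced distributions can be compared). -/
def GPBCCode.joint (qZ : Z → ℝ) (Wg : X → Z → Y1 × Y2 → ℝ)
    (b : GPBCCode Z X Y1 Y2 n R₁ R₂) :
    (Msg n R₁ × Msg n R₂) × (Fin n → X) × (Fin n → Y1) × (Fin n → Y2) × (Fin n → Z) ×
      (Msg n R₁ × Msg n R₂) → ℝ := fun ω =>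
  (∏ i, qZ (ω.2.2.2.2.1 i))
    * (((Fintype.card (Msg n R₁) : ℝ) * (Fintype.card (Msg n R₂) : ℝ))⁻¹)
    * b.enc ω.2.2.2.2.1 ω.1 ω.2.1
    * (∏ i, Wg (ω.2.1 i) (ω.2.2.2.2.1 i) (ω.2.2.1 i, ω.2.2.2.1 i))
    * (if b.dec1 ω.2.2.1 = ω.2.2.2.2.2.1 ∧ b.dec2 ω.2.2.2.1 = ω.2.2.2.2.2.2 then 1 else 0)

/-- The error probability `ℙ_{Q^{(b_n)}}((M̂₁,M̂₂) ≠ (M₁,M₂))` of a GPBC code. -/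
def GPBCCode.errProb (qZ : Z → ℝ) (Wg : X → Z → Y1 × Y2 → ℝ)
    (b : GPBCCode Z X Y1 Y2 n R₁ R₂) : ℝ :=
  ∑ ω : (Msg n R₁ × Msg n R₂) × (Fin n → X) × (Fin n → Y1) × (Fin n → Y2) × (Fin n → Z) ×
      (Msg n R₁ × Msg n R₂),
    if ω.2.2.2.2.2 ≠ ω.1 then b.joint qZ Wg ω else 0

/-!
Under `P^{(c)}` the state `Zⁿ` is a channel output, under `Q^{(b)}` it is drawn from `q_Zⁿ`.
Since `p_{Y₁,Y₂,Z|X} = p_{Z|X} · p_{Y₁,Y₂|X,Z}` and `g = P_{Xⁿ|Zⁿ,M}`, both laws factor as a law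
of `(M, Zⁿ)` times one common kernel producing `(Xⁿ, Y₁ⁿ, Y₂ⁿ, M̂)`, so
`‖P − Q‖_TV = ‖P_{M,Zⁿ} − p^U q_Zⁿ‖_TV ≤ ‖P_{M,Zⁿ,M̂} − p^U 1{M̂ = M} q_Zⁿ‖_TV`.
The error probabilities of `b` and `c` differ by at most `2‖P − Q‖_TV`, and that of `c` is at
most twice the hypothesised distance because the target puts no mass on `M̂ ≠ M`.
-/

section SumLemmas

variable {α β ι Ω : Type*} [Fintype α] [Fintype β] [Fintype ι] [Fintype Ω]

theorem sum_sum_prod_eq_prod_sum [DecidableEq ι] (F : ι → α → β → ℝ) :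
    ∑ f : ι → α, ∑ g : ι → β, ∏ i, F i (f i) (g i) = ∏ i, ∑ p : α × β, F i p.1 p.2 := by
  rw [Finset.prod_univ_sum, ← Fintype.sum_prod_type']
  exact Fintype.sum_equiv (Equiv.arrowProdEquivProdArrow ι (fun _ => α) (fun _ => β)).symm
    _ _ fun _ => rfl

theorem sum_abs_mul_sub_mul_eq_of_sum_eq_one (a t : α → ℝ) {K : α → β → ℝ}
    (hK₀ : ∀ s r, 0 ≤ K s r) (hK₁ : ∀ s, ∑ r, K s r = 1) :
    ∑ s, ∑ r, |a s * K s r - t s * K s r| = ∑ s, |a s - t s| := by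
  refine Finset.sum_congr rfl fun s _ => ?_
  simp_rw [← sub_mul, abs_mul, abs_of_nonneg (hK₀ s _), ← Finset.mul_sum, hK₁, mul_one]

theorem abs_sum_ite_sub_sum_ite_le (E : Ω → Prop) [DecidablePred E] (p q : Ω → ℝ) :
    |∑ ω, (if E ω then q ω else 0) - ∑ ω, (if E ω then p ω else 0)| ≤ 2 * tvDist p q := by
  rw [← Finset.sum_sub_distrib, tvDist, ← mul_assoc, mul_one_div_cancel two_ne_zero, one_mul]
  refine (Finset.abs_sum_le_sum_abs _ _).trans (Finset.sum_le_sum fun ω _ => ?_)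
  split_ifs <;> simp [abs_sub_comm]

theorem sum_ite_le_two_mul_tvDist (E : Ω → Prop) [DecidablePred E] {p t : Ω → ℝ}
    (hp : ∀ ω, 0 ≤ p ω) (ht : ∀ ω, E ω → t ω = 0) :
    ∑ ω, (if E ω then p ω else 0) ≤ 2 * tvDist p t := by
  rw [tvDist, ← mul_assoc, mul_one_div_cancel two_ne_zero, one_mul]
  refine Finset.sum_le_sum fun ω _ => ?_
  split_ifs with h
  · rw [ht ω h, sub_zero, abs_of_nonneg (hp ω)]
  · exact abs_nonneg _

end SumLemmas

def equivMsgStateRest (M A B₁ B₂ S M' : Type*) :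
    M × A × B₁ × B₂ × S × M' ≃ (M × S) × (A × B₁ × B₂ × M') where
  toFun ω := ((ω.1, ω.2.2.2.2.1), (ω.2.1, ω.2.2.1, ω.2.2.2.1, ω.2.2.2.2.2))
  invFun p := (p.1.1, p.2.1, p.2.2.1, p.2.2.2.1, p.1.2, p.2.2.2.2)
  left_inv _ := rfl
  right_inv _ := rfl

def equivMsgStateEstRest (M A B₁ B₂ S M' : Type*) :
    M × A × B₁ × B₂ × S × M' ≃ (M × S × M') × (A × B₁ × B₂) where
  toFun ω := ((ω.1, ω.2.2.2.2.1, ω.2.2.2.2.2), (ω.2.1, ω.2.2.1, ω.2.2.2.1))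
  invFun p := (p.1.1, p.2.1, p.2.2.1, p.2.2.2, p.1.2.1, p.1.2.2)
  left_inv _ := rfl
  right_inv _ := rfl

theorem Fintype.sum_eq_sum_sum_of_equiv {Ω α β : Type*} [Fintype Ω] [Fintype α] [Fintype β]
    (e : Ω ≃ α × β) (f : Ω → ℝ) : ∑ ω, f ω = ∑ a, ∑ b, f (e.symm (a, b)) := by
  rw [← e.symm.sum_comp, Fintype.sum_prod_type]

theorem sum_prod_ite_eq_and_eq_eq_one {M₁ M₂ : Type*} [Fintype M₁] [Fintype M₂] [DecidableEq M₁]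
    [DecidableEq M₂] (d₁ : M₁) (d₂ : M₂) :
    ∑ m : M₁ × M₂, (if d₁ = m.1 ∧ d₂ = m.2 then (1 : ℝ) else 0) = 1 := by
  simp [Fintype.sum_prod_type, ite_and]

section Kernel

variable {A B₁ B₂ S : Type} [Fintype B₁] [Fintype B₂] {W : A → B₁ × B₂ × S → ℝ}

theorem W_eq_sum_mul_condY12givenXZ (hW : ∀ x y, 0 ≤ W x y) (x : A) (z : S) (y : B₁ × B₂) :
    W x (y.1, y.2, z) = (∑ y' : B₁ × B₂, W x (y'.1, y'.2, z)) * condY12givenXZ W x z y := by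
  unfold condY12givenXZ
  split_ifs with h
  · rw [mul_div_cancel₀ _ h.ne']
  · have h₀ : ∑ y' : B₁ × B₂, W x (y'.1, y'.2, z) = 0 :=
      (not_lt.mp h).antisymm (Finset.sum_nonneg fun _ _ => hW _ _)
    rw [h₀, zero_mul]
    exact (Finset.sum_eq_zero_iff_of_nonneg fun _ _ => hW _ _).mp h₀ y (Finset.mem_univ y)

theorem condY12givenXZ_nonneg (hW : ∀ x y, 0 ≤ W x y) (x : A) (z : S) (y : B₁ × B₂) :
    0 ≤ condY12givenXZ W x z y := by
  unfold condY12givenXZ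
  split_ifs with h
  · exact div_nonneg (hW _ _) h.le
  · positivity

theorem sum_condY12givenXZ [Fintype S] (hW : ∀ x, ∑ y, W x y = 1) (x : A) (z : S) :
    ∑ y : B₁ × B₂, condY12givenXZ W x z y = 1 := by
  obtain ⟨⟨y₁, y₂, -⟩⟩ : Nonempty (B₁ × B₂ × S) :=
    Finset.univ_nonempty_iff.mp (Finset.nonempty_of_sum_ne_zero ((hW x).symm ▸ one_ne_zero))
  unfold condY12givenXZ
  split_ifs with h
  · rw [← Finset.sum_div, div_self h.ne']
  · have : Nonempty B₁ := ⟨y₁⟩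
    have : Nonempty B₂ := ⟨y₂⟩
    rw [Finset.sum_const, Finset.card_univ, Fintype.card_prod, nsmul_eq_mul, Nat.cast_mul,
      mul_inv_cancel₀ (by positivity)]

end Kernel

/-- The conditional law of `(Xⁿ, Y₁ⁿ, Y₂ⁿ, (M̂₁,M̂₂))` given `((M₁,M₂), Zⁿ)` under `Q^{(b)}`. -/
def GPBCCode.kernel (Wg : X → Z → Y1 × Y2 → ℝ) (b : GPBCCode Z X Y1 Y2 n R₁ R₂)
    (s : (Msg n R₁ × Msg n R₂) × (Fin n → Z))
    (r : (Fin n → X) × (Fin n → Y1) × (Fin n → Y2) × (Msg n R₁ × Msg n R₂)) : ℝ :=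
  b.enc s.2 s.1 r.1 * (∏ i, Wg (r.1 i) (s.2 i) (r.2.1 i, r.2.2.1 i))
    * (if b.dec1 r.2.1 = r.2.2.2.1 ∧ b.dec2 r.2.2.1 = r.2.2.2.2 then 1 else 0)

namespace GPBCCode

variable {Wg : X → Z → Y1 × Y2 → ℝ} {b : GPBCCode Z X Y1 Y2 n R₁ R₂}

theorem kernel_nonneg (hb : b.valid) (hWg : ∀ x z y, 0 ≤ Wg x z y) (s r) :
    0 ≤ b.kernel Wg s r := by
  unfold kernel
  have := (hb s.2 s.1).1 r.1
  have := Finset.prod_nonneg fun i (_ : i ∈ Finset.univ) =>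
    hWg (r.1 i) (s.2 i) (r.2.1 i, r.2.2.1 i)
  positivity

theorem sum_kernel (hb : b.valid) (hWg : ∀ x z, ∑ y, Wg x z y = 1) (s) :
    ∑ r, b.kernel Wg s r = 1 := by
  have hY : ∀ x : Fin n → X,
      ∑ y₁ : Fin n → Y1, ∑ y₂ : Fin n → Y2, ∏ i, Wg (x i) (s.2 i) (y₁ i, y₂ i) = 1 := by
    intro x
    simp [sum_sum_prod_eq_prod_sum (fun i a c => Wg (x i) (s.2 i) (a, c)), hWg]
  simp only [kernel, Fintype.sum_prod_type (α₁ := Fin n → X),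
    Fintype.sum_prod_type (α₁ := Fin n → Y1), Fintype.sum_prod_type (α₁ := Fin n → Y2),
    ← Finset.mul_sum, sum_prod_ite_eq_and_eq_eq_one, mul_one, hY]
  exact (hb s.2 s.1).2

theorem joint_eq_mul_kernel (qZ : Z → ℝ) (m : Msg n R₁ × Msg n R₂) (x : Fin n → X)
    (y₁ : Fin n → Y1) (y₂ : Fin n → Y2) (z : Fin n → Z) (m' : Msg n R₁ × Msg n R₂) :
    b.joint qZ Wg (m, x, y₁, y₂, z, m')
      = (∏ i, qZ (z i)) * ((Fintype.card (Msg n R₁) : ℝ) * (Fintype.card (Msg n R₂) : ℝ))⁻¹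
        * b.kernel Wg (m, z) (x, y₁, y₂, m') := by
  simp only [joint, kernel]
  ring

end GPBCCode

theorem sum_targetMZM {S : Type} (qZ : S → ℝ) (m : Msg n R₁ × Msg n R₂) (z : Fin n → S) :
    ∑ m', targetMZM qZ n R₁ R₂ (m, z, m')
      = (∏ i, qZ (z i)) * ((Fintype.card (Msg n R₁) : ℝ) * (Fintype.card (Msg n R₂) : ℝ))⁻¹ := by
  simp only [targetMZM]
  rw [Finset.sum_eq_single m (fun m' _ h => by rw [if_neg h]; ring) (by simp), if_pos rfl]
  ring

namespace WTBCCode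

variable {W : X → Y1 × Y2 × Z → ℝ} {c : WTBCCode X Y1 Y2 Z n R₁ R₂}

theorem joint_nonneg (hW : ∀ x y, 0 ≤ W x y) (hc : c.valid) (ω) : 0 ≤ c.joint W ω := by
  unfold joint
  have := (hc ω.1).1 ω.2.1
  have := Finset.prod_nonneg fun i (_ : i ∈ Finset.univ) =>
    hW (ω.2.1 i) (ω.2.2.1 i, ω.2.2.2.1 i, ω.2.2.2.2.1 i)
  positivity

theorem margMXZ_nonneg (hW : ∀ x y, 0 ≤ W x y) (hc : c.valid) (ω) : 0 ≤ c.margMXZ W ω :=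
  Finset.sum_nonneg fun _ _ => Finset.sum_nonneg fun _ _ => Finset.sum_nonneg fun _ _ =>
    joint_nonneg hW hc _

theorem margMZM_nonneg (hW : ∀ x y, 0 ≤ W x y) (hc : c.valid) (ω) : 0 ≤ c.margMZM W ω :=
  Finset.sum_nonneg fun _ _ => Finset.sum_nonneg fun _ _ => Finset.sum_nonneg fun _ _ =>
    joint_nonneg hW hc _

theorem margMXZ_eq (m : Msg n R₁ × Msg n R₂) (x : Fin n → X) (z : Fin n → Z) :
    c.margMXZ W (m, x, z)
      = ((Fintype.card (Msg n R₁) : ℝ) * (Fintype.card (Msg n R₂) : ℝ))⁻¹ * c.enc m x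
        * ∏ i, ∑ y : Y1 × Y2, W (x i) (y.1, y.2, z i) := by
  simp only [margMXZ, joint, ← Finset.mul_sum, sum_prod_ite_eq_and_eq_eq_one, mul_one]
  rw [sum_sum_prod_eq_prod_sum (fun i a b => W (x i) (a, b, z i))]

theorem sum_margMXZ_eq_sum_margMZM (m : Msg n R₁ × Msg n R₂) (z : Fin n → Z) :
    ∑ x, c.margMXZ W (m, x, z) = ∑ m', c.margMZM W (m, z, m') := by
  simp only [margMXZ, margMZM]
  symm
  rw [Finset.sum_comm]
  refine Finset.sum_congr rfl fun _ _ => ?_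
  rw [Finset.sum_comm]
  refine Finset.sum_congr rfl fun _ _ => ?_
  rw [Finset.sum_comm]

theorem inducedGPBCEnc_nonneg (hW : ∀ x y, 0 ≤ W x y) (hc : c.valid) (z m x) :
    0 ≤ inducedGPBCEnc W c z m x := by
  unfold inducedGPBCEnc
  split_ifs with h
  · exact div_nonneg (margMXZ_nonneg hW hc _) h.le
  · positivity

theorem sum_inducedGPBCEnc (hc : c.valid) (z m) : ∑ x, inducedGPBCEnc W c z m x = 1 := by
  have : Nonempty (Fin n → X) :=
    Finset.univ_nonempty_iff.mp (Finset.nonempty_of_sum_ne_zero ((hc m).2.symm ▸ one_ne_zero))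
  unfold inducedGPBCEnc
  split_ifs with h
  · rw [← Finset.sum_div, div_self h.ne']
  · rw [Finset.sum_const, Finset.card_univ, nsmul_eq_mul, mul_inv_cancel₀ (by positivity)]

theorem toGPBC_valid (hW : ∀ x y, 0 ≤ W x y) (hc : c.valid) : (c.toGPBC W).valid :=
  fun z m => ⟨inducedGPBCEnc_nonneg hW hc z m, sum_inducedGPBCEnc hc z m⟩

theorem margMXZ_eq_mul_inducedGPBCEnc (hW : ∀ x y, 0 ≤ W x y) (hc : c.valid)
    (m : Msg n R₁ × Msg n R₂) (x : Fin n → X) (z : Fin n → Z) :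
    c.margMXZ W (m, x, z) = (∑ x', c.margMXZ W (m, x', z)) * inducedGPBCEnc W c z m x := by
  unfold inducedGPBCEnc
  split_ifs with h
  · rw [mul_div_cancel₀ _ h.ne']
  · have h₀ : ∑ x', c.margMXZ W (m, x', z) = 0 :=
      (not_lt.mp h).antisymm (Finset.sum_nonneg fun _ _ => margMXZ_nonneg hW hc _)
    rw [h₀, zero_mul]
    exact (Finset.sum_eq_zero_iff_of_nonneg fun _ _ => margMXZ_nonneg hW hc _).mp h₀ x
      (Finset.mem_univ x)

theorem joint_eq_mul_kernel (hW : ∀ x y, 0 ≤ W x y) (hc : c.valid) (m : Msg n R₁ × Msg n R₂)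
    (x : Fin n → X) (y₁ : Fin n → Y1) (y₂ : Fin n → Y2) (z : Fin n → Z)
    (m' : Msg n R₁ × Msg n R₂) :
    c.joint W (m, x, y₁, y₂, z, m')
      = (∑ m'', c.margMZM W (m, z, m''))
        * (c.toGPBC W).kernel (condY12givenXZ W) (m, z) (x, y₁, y₂, m') := by
  have hW_prod : ∏ i, W (x i) (y₁ i, y₂ i, z i)
      = (∏ i, ∑ y : Y1 × Y2, W (x i) (y.1, y.2, z i))
        * ∏ i, condY12givenXZ W (x i) (z i) (y₁ i, y₂ i) := by
    rw [← Finset.prod_mul_distrib]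
    exact Finset.prod_congr rfl fun i _ => W_eq_sum_mul_condY12givenXZ hW _ _ (y₁ i, y₂ i)
  have hmarg := margMXZ_eq_mul_inducedGPBCEnc hW hc m x z
  rw [margMXZ_eq, sum_margMXZ_eq_sum_margMZM] at hmarg
  simp only [joint, GPBCCode.kernel, toGPBC, hW_prod]
  rw [← mul_assoc, ← mul_assoc, ← mul_assoc, ← hmarg]
  rfl

theorem tvDist_joint_toGPBC_joint_le (hW : ∀ x, IsPMF (W x)) (hc : c.valid) (qZ : Z → ℝ) :
    tvDist (c.joint W) ((c.toGPBC W).joint qZ (condY12givenXZ W))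
      ≤ tvDist (c.margMZM W) (targetMZM qZ n R₁ R₂) := by
  have hW₀ : ∀ x y, 0 ≤ W x y := fun x => (hW x).1
  have hK₀ := (c.toGPBC W).kernel_nonneg (toGPBC_valid hW₀ hc) (condY12givenXZ_nonneg hW₀)
  have hK₁ := (c.toGPBC W).sum_kernel (toGPBC_valid hW₀ hc) (sum_condY12givenXZ fun x => (hW x).2)
  let e := equivMsgStateRest (Msg n R₁ × Msg n R₂) (Fin n → X) (Fin n → Y1) (Fin n → Y2)
    (Fin n → Z) (Msg n R₁ × Msg n R₂)
  unfold tvDist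
  gcongr
  calc ∑ ω, |c.joint W ω - (c.toGPBC W).joint qZ (condY12givenXZ W) ω|
      = ∑ s, ∑ r, |(∑ m', c.margMZM W (s.1, s.2, m')) * (c.toGPBC W).kernel (condY12givenXZ W) s r
          - (∑ m', targetMZM qZ n R₁ R₂ (s.1, s.2, m'))
            * (c.toGPBC W).kernel (condY12givenXZ W) s r| := by
        rw [Fintype.sum_eq_sum_sum_of_equiv e]
        refine Finset.sum_congr rfl fun s _ => Finset.sum_congr rfl fun r _ => ?_
        rw [joint_eq_mul_kernel hW₀ hc, GPBCCode.joint_eq_mul_kernel, sum_targetMZM]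
        rfl
    _ = ∑ s : (Msg n R₁ × Msg n R₂) × (Fin n → Z),
          |∑ m', c.margMZM W (s.1, s.2, m') - ∑ m', targetMZM qZ n R₁ R₂ (s.1, s.2, m')| :=
        sum_abs_mul_sub_mul_eq_of_sum_eq_one _ _ hK₀ hK₁
    _ ≤ ∑ s : (Msg n R₁ × Msg n R₂) × (Fin n → Z),
          ∑ m', |c.margMZM W (s.1, s.2, m') - targetMZM qZ n R₁ R₂ (s.1, s.2, m')| := by
        gcongr with s
        rw [← Finset.sum_sub_distrib]
        exact Finset.abs_sum_le_sum_abs _ _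
    _ = ∑ ω, |c.margMZM W ω - targetMZM qZ n R₁ R₂ ω| := by
        simp only [Fintype.sum_prod_type]

theorem sum_ite_ne_joint_le (hW : ∀ x y, 0 ≤ W x y) (hc : c.valid) (qZ : Z → ℝ) :
    ∑ ω, (if ω.2.2.2.2.2 ≠ ω.1 then c.joint W ω else 0)
      ≤ 2 * tvDist (c.margMZM W) (targetMZM qZ n R₁ R₂) := by
  let e := equivMsgStateEstRest (Msg n R₁ × Msg n R₂) (Fin n → X) (Fin n → Y1) (Fin n → Y2)
    (Fin n → Z) (Msg n R₁ × Msg n R₂)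
  calc ∑ ω, (if ω.2.2.2.2.2 ≠ ω.1 then c.joint W ω else 0)
      = ∑ ω', if ω'.2.2 ≠ ω'.1 then c.margMZM W ω' else 0 := by
        rw [Fintype.sum_eq_sum_sum_of_equiv e]
        refine Finset.sum_congr rfl fun ω' _ => ?_
        by_cases h : ω'.2.2 = ω'.1 <;>
          simp [e, equivMsgStateEstRest, h, margMZM, Fintype.sum_prod_type]
    _ ≤ 2 * tvDist (c.margMZM W) (targetMZM qZ n R₁ R₂) :=
        sum_ite_le_two_mul_tvDist _ (margMZM_nonneg hW hc) fun _ h => by simp [targetMZM, h]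

theorem abs_errProb_toGPBC_le (hW : ∀ x, IsPMF (W x)) (hc : c.valid) (qZ : Z → ℝ) :
    |(c.toGPBC W).errProb qZ (condY12givenXZ W)|
      ≤ 4 * tvDist (c.margMZM W) (targetMZM qZ n R₁ R₂) := by
  set Q := (c.toGPBC W).joint qZ (condY12givenXZ W)
  set PE := ∑ ω, (if ω.2.2.2.2.2 ≠ ω.1 then c.joint W ω else 0)
  have hPE : 0 ≤ PE := Finset.sum_nonneg fun ω _ => by
    split_ifs
    exacts [joint_nonneg (fun x => (hW x).1) hc ω, le_rfl]
  calc |(c.toGPBC W).errProb qZ (condY12givenXZ W)|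
      ≤ |(c.toGPBC W).errProb qZ (condY12givenXZ W) - PE| + |PE| :=
        sub_le_iff_le_add.mp (abs_sub_abs_le_abs_sub _ _)
    _ ≤ 2 * tvDist (c.joint W) Q + 2 * tvDist (c.margMZM W) (targetMZM qZ n R₁ R₂) := by
        rw [abs_of_nonneg hPE]
        exact add_le_add (abs_sum_ite_sub_sum_ite_le _ _ _)
          (sum_ite_ne_joint_le (fun x => (hW x).1) hc qZ)
    _ ≤ 4 * tvDist (c.margMZM W) (targetMZM qZ n R₁ R₂) := by
        linarith [tvDist_joint_toGPBC_joint_le hW hc qZ]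

end WTBCCode

theorem tendsto_const_mul_exp_neg_mul_atTop {γ : ℝ} (hγ : 0 < γ) (C : ℝ) :
    Filter.Tendsto (fun n : ℕ => C * Real.exp (-(n * γ))) Filter.atTop (nhds 0) := by
  simpa using (Real.tendsto_exp_neg_atTop_nhds_zero.comp
    (tendsto_natCast_atTop_atTop.atTop_mul_const hγ)).const_mul C

theorem good_WTBC_codes_induce_good_GPBC_codes_general
    (W : X → Y1 × Y2 × Z → ℝ) (hW : ∀ x, IsPMF (W x))
    (c : ∀ n : ℕ, WTBCCode X Y1 Y2 Z n R₁ R₂) (hc : ∀ n, (c n).valid)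
    (qZ : Z → ℝ) (γ : ℝ) (hγ : 0 < γ)
    (hach : ∀ᶠ n in Filter.atTop,
      tvDist ((c n).margMZM W) (targetMZM qZ n R₁ R₂) ≤ Real.exp (-(n * γ))) :
    (∀ n, ((c n).toGPBC W).valid) ∧
    (∀ᶠ n in Filter.atTop,
      tvDist ((c n).joint W) (((c n).toGPBC W).joint qZ (condY12givenXZ W))
        ≤ Real.exp (-(n * γ))) ∧
    Filter.Tendsto (fun n => ((c n).toGPBC W).errProb qZ (condY12givenXZ W))
      Filter.atTop (nhds 0) := by
  refine ⟨fun n => (c n).toGPBC_valid (fun x => (hW x).1) (hc n),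
    hach.mono fun n hn => ((c n).tvDist_joint_toGPBC_joint_le hW (hc n) qZ).trans hn, ?_⟩
  refine squeeze_zero_norm' ?_ (tendsto_const_mul_exp_neg_mul_atTop hγ 4)
  filter_upwards [hach] with n hn
  exact ((c n).abs_errProb_toGPBC_le hW (hc n) qZ).trans (by linarith)

/-- **Good WTBC codes induce good GPBC codes (Proposition 3).**
Suppose `(R₁,R₂)` is achievable for the WTBC `p_{Y₁,Y₂,Z|X}` via codes `c_n`, `γ > 0` and a
PMF `q_Z` with `‖P^{(c_n)}_{M₁,M₂,M̂₁,M̂₂,Zⁿ} − p^U 1{(M̂₁,M̂₂)=(M₁,M₂)} q_Z^n‖_TV ≤ e^{−nγ}`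
for all large `n`.  Define `g_n = P^{(c_n)}_{Xⁿ|Zⁿ,M₁,M₂}` and `ψⱼ = φⱼ`.  Then:
(1) `b_n = (g_n, ψ₁, ψ₂)` is an `(n,R₁,R₂)`-code for the GPBC `(q_Z, p_{Y₁,Y₂|X,Z})`;
(2) `‖P^{(c_n)} − Q^{(b_n)}‖_TV ≤ e^{−nγ}` for all sufficiently large `n`;
(3) `P_e(b_n) → 0`, i.e. `(R₁,R₂)` is achievable for that GPBC. -/
theorem good_WTBC_codes_induce_good_GPBC_codes
    (W : X → Y1 × Y2 × Z → ℝ) (hW : ∀ x, IsPMF (W x))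
    (hR₁ : 0 ≤ R₁) (hR₂ : 0 ≤ R₂)
    (c : ∀ n : ℕ, WTBCCode X Y1 Y2 Z n R₁ R₂) (hc : ∀ n, (c n).valid)
    (qZ : Z → ℝ) (hqZ : IsPMF qZ) (γ : ℝ) (hγ : 0 < γ)
    (hach : ∀ᶠ n in Filter.atTop,
      tvDist ((c n).margMZM W) (targetMZM qZ n R₁ R₂) ≤ Real.exp (-(n * γ))) :
    (∀ n, ((c n).toGPBC W).valid) ∧
    (∀ᶠ n in Filter.atTop,
      tvDist ((c n).joint W) (((c n).toGPBC W).joint qZ (condY12givenXZ W))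
        ≤ Real.exp (-(n * γ))) ∧
    Filter.Tendsto (fun n => ((c n).toGPBC W).errProb qZ (condY12givenXZ W))
      Filter.atTop (nhds 0) :=
  good_WTBC_codes_induce_good_GPBC_codes_general W hW c hc qZ γ hγ hach

end
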